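/- Let n > 1 and let A be a pair-set in Q_n. Suppose B is an i-completion of A for some coordinate i ∈ [n], i.e. B is a pair-set with B ⇒* A such that every pair {α,β} ∈ B satisfies α(i) = β(i). If ρ_{i=0}(B) and ρ_{i=1}(B) are connectable pair-sets in Q_{n-1}, then A is connectable. -/

import Mathlib

open SimpleGraph Finset

attribute [local instance 10] Classical.propDecidable

/-- Vertices of the `n`-dimensional hypercube: 0-1 vectors of length `n`. -/
abbrev Vtx (n : ℕ) : Type := Fin n → Bool

/-- The hypercube graph `Q_n`: two vectors are adjacent iff they differ in
exactly one coordinate, i.e. their Hamming distance is `1`. -/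
def cube (n : ℕ) : SimpleGraph (Vtx n) where
  Adj α β := hammingDist α β = 1
  symm := ⟨fun α β (h : hammingDist α β = 1) =>
    show hammingDist β α = 1 by rwa [hammingDist_comm]⟩
  loopless := ⟨fun α (h : hammingDist α α = 1) => by
    simp [hammingDist_self] at h⟩

/-- The parity `χ(α) = (-1)^(sum of coordinates of α)`. -/
def chi {n : ℕ} (α : Vtx n) : ℤ := ∏ i, if α i then (-1 : ℤ) else 1

/-- `χ(α) + χ(β)` for an unordered pair `{α, β}`. -/
def pairChi {n : ℕ} : Sym2 (Vtx n) → ℤ :=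
  Sym2.lift ⟨fun α β => chi α + chi β, fun _ _ => add_comm _ _⟩

/-- `∪A` : the set of all vertices occurring in pairs of `A`. -/
def suppA {n : ℕ} (A : Finset (Sym2 (Vtx n))) : Set (Vtx n) :=
  {v | ∃ p ∈ A, v ∈ p}

/-- A pair-set: distinct pairs are disjoint (as vertex sets), and a nonempty
pair-set contains a non-degenerated pair. -/
def IsPairSet {n : ℕ} (A : Finset (Sym2 (Vtx n))) : Prop :=
  (∀ p ∈ A, ∀ q ∈ A, p ≠ q → ∀ v : Vtx n, v ∈ p → v ∉ q) ∧
  (A.Nonempty → ∃ p ∈ A, ¬ p.IsDiag)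

/-- An odd pair: its two vertices have different parities. -/
def OddPair {n : ℕ} (p : Sym2 (Vtx n)) : Prop :=
  ∃ α β : Vtx n, p = s(α, β) ∧ chi α ≠ chi β

/-- An odd pair-set: every pair is odd. -/
def OddPairSet {n : ℕ} (A : Finset (Sym2 (Vtx n))) : Prop :=
  ∀ p ∈ A, OddPair p

/-- A balanced pair-set: the parities sum up to `0`. -/
def BalancedPS {n : ℕ} (A : Finset (Sym2 (Vtx n))) : Prop :=
  ∑ p ∈ A, pairChi p = 0

/-- An edge-pair: its two vertices differ in exactly one coordinate. -/
def IsEdgePair {n : ℕ} (p : Sym2 (Vtx n)) : Prop :=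
  ∃ α β : Vtx n, p = s(α, β) ∧ hammingDist α β = 1

/-- `enco X` : vertices all of whose neighbours lie in `X`. -/
def enco {n : ℕ} (X : Set (Vtx n)) : Set (Vtx n) :=
  {γ | ∀ δ : Vtx n, (cube n).Adj γ δ → δ ∈ X}

/-- `enc X = enco X \ X` for a vertex set `X`. -/
def encSet {n : ℕ} (X : Set (Vtx n)) : Set (Vtx n) := enco X \ X

/-- `enc A = enco (∪A) \ ∪A` for a pair-set `A`. -/
def encA {n : ℕ} (A : Finset (Sym2 (Vtx n))) : Set (Vtx n) :=
  enco (suppA A) \ suppA A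

/-- A pair-set `A` is connectable if there is a family of paths in `Q_n`, one
path joining the two vertices of each pair of `A`, such that every vertex of
`Q_n` lies on exactly one of these paths. -/
def Connectable {n : ℕ} (A : Finset (Sym2 (Vtx n))) : Prop :=
  ∃ (src tgt : Sym2 (Vtx n) → Vtx n)
    (path : (p : Sym2 (Vtx n)) → (cube n).Walk (src p) (tgt p)),
    (∀ p ∈ A, p = s(src p, tgt p)) ∧
    (∀ p ∈ A, (path p).IsPath) ∧
    (∀ v : Vtx n, ∃! p : Sym2 (Vtx n), p ∈ A ∧ v ∈ (path p).support)

/-- `A` contains at least two edge-pairs. -/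
def TwoEdgePairs {n : ℕ} (A : Finset (Sym2 (Vtx n))) : Prop :=
  ∃ p ∈ A, ∃ q ∈ A, p ≠ q ∧ IsEdgePair p ∧ IsEdgePair q

/-- A diminishable pair-set. -/
def Diminishable {n : ℕ} (A : Finset (Sym2 (Vtx n))) : Prop :=
  IsPairSet A ∧ OddPairSet A ∧
  ((A.card ≤ n - 1 ∧
      (n = 4 →
        (∃ p ∈ A, IsEdgePair p) ∨
          ¬∃ X : Set (Vtx n), suppA A ⊆ X ∧
            Nonempty ((cube n).induce X ≃g cube 3))) ∨
    (A.card = n ∧ n ≠ 4 ∧ TwoEdgePairs A ∧ encA A = ∅))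

/-- The coordinate `i` is separating for `A`. -/
def Separating {n : ℕ} (i : Fin n) (A : Finset (Sym2 (Vtx n))) : Prop :=
  ∃ α β α' β' : Vtx n, s(α, β) ∈ A ∧ s(α', β') ∈ A ∧
    hammingDist α β = 1 ∧ hammingDist α' β' = 1 ∧
    α i = β i ∧ α' i = β' i ∧ α i ≠ α' i

/-- The relation `A ⇒ B`. -/
def StepRel {n : ℕ} (A B : Finset (Sym2 (Vtx n))) : Prop :=
  ∃ (α β α' β' : Vtx n) (i : Fin n),
    s(α, β) ∈ A ∧ s(α', β') ∈ A ∧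
    β' = Function.update β i (!(β i)) ∧
    B = A \ {s(α, β), s(α', β')} ∪ {s(α, α')}

/-- Isomorphism of pair-sets, induced by an automorphism of the hypercube. -/
def Isomorphic {n : ℕ} (A B : Finset (Sym2 (Vtx n))) : Prop :=
  ∃ f : cube n ≃g cube n, B = A.image (Sym2.map f)

/-- `ρ_{i=k}` applied to a pair-set: keep the pairs with both `i`-th
coordinates equal to `k` and delete the `i`-th coordinate. -/
def rhoPairs {m : ℕ} (i : Fin (m + 1)) (k : Bool) (B : Finset (Sym2 (Vtx (m + 1)))) :
    Finset (Sym2 (Vtx m)) :=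
  (B.filter fun p => ∀ v ∈ p, v i = k).image (Sym2.map (Fin.removeNth i))

/-- `ρ_{i=k}` applied to a vertex set. -/
def rhoSet {m : ℕ} (i : Fin (m + 1)) (k : Bool) (X : Set (Vtx (m + 1))) : Set (Vtx m) :=
  {γ | ∃ α ∈ X, α i = k ∧ γ = Fin.removeNth i α}

/-- `ι_{i,k}(A, B)`. -/
def iotaPairs {m : ℕ} (i : Fin (m + 1)) (k : Bool) (A B : Finset (Sym2 (Vtx m))) :
    Finset (Sym2 (Vtx (m + 1))) :=
  A.image (Sym2.map (i.insertNth k)) ∪ B.image (Sym2.map (i.insertNth (!k)))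

/-!
The `i`-th coordinate splits `Q_{m+1}` into two copies of `Q_m`, and every pair of `B` lies in
one of them, so path covers for `ρ_{i=0}(B)` and `ρ_{i=1}(B)` lift to a path cover for `B`.
A step `C ⇒ D` trades pairs `{α, β}`, `{α', β'}` with `β, β'` adjacent for `{α, α'}`; the edge
`ββ'` joins the two disjoint paths into one, so connectability is preserved along `B ⇒* A`.
-/

lemma existsUnique_mem_update_union {ι α : Type*} [DecidableEq ι] {C : Finset ι}
    {S : ι → Set α} (hS : ∀ x, ∃! i, i ∈ C ∧ x ∈ S i) {p q r : ι} (hp : p ∈ C) (hq : q ∈ C)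
    (hr : ∀ j ∈ C, j ≠ p → j ≠ q → j ≠ r) (x : α) :
    ∃! j, j ∈ C \ {p, q} ∪ {r} ∧ x ∈ Function.update S r (S p ∪ S q) j := by
  obtain ⟨i, ⟨hiC, hxi⟩, hi⟩ := hS x
  have hS' : ∀ j ∈ C \ {p, q}, Function.update S r (S p ∪ S q) j = S j := fun j hj => by
    simp only [Finset.mem_sdiff, Finset.mem_insert, Finset.mem_singleton, not_or] at hj
    exact Function.update_of_ne (hr j hj.1 hj.2.1 hj.2.2) _ _
  simp only [Finset.mem_union, Finset.mem_singleton]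
  by_cases hipq : i = p ∨ i = q
  · refine ⟨r, ⟨.inr rfl, ?_⟩, ?_⟩
    · rw [Function.update_self]
      rcases hipq with rfl | rfl
      exacts [.inl hxi, .inr hxi]
    · rintro j ⟨hj | rfl, hxj⟩
      · refine absurd ?_ (Finset.mem_sdiff.1 hj).2
        rw [hi j ⟨(Finset.mem_sdiff.1 hj).1, hS' j hj ▸ hxj⟩]
        simpa using hipq
      · rfl
  · have hiD : i ∈ C \ {p, q} := by simpa [hiC] using hipq
    refine ⟨i, ⟨.inl hiD, (hS' i hiD).symm ▸ hxi⟩, ?_⟩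
    rintro j ⟨hj | rfl, hxj⟩
    · exact hi j ⟨(Finset.mem_sdiff.1 hj).1, hS' j hj ▸ hxj⟩
    · rw [Function.update_self] at hxj
      exact absurd (hxj.imp (fun hx => (hi p ⟨hp, hx⟩).symm) fun hx => (hi q ⟨hq, hx⟩).symm) hipq

namespace SimpleGraph

variable {V W : Type*} {G : SimpleGraph V}

def IsPathOn (G : SimpleGraph V) (X : Set V) : Sym2 V → Prop :=
  Sym2.lift ⟨fun u v => ∃ w : G.Walk u v, w.IsPath ∧ {x | x ∈ w.support} = X,
    fun u v => propext ⟨fun ⟨w, hw, hX⟩ => ⟨w.reverse, hw.reverse, by simpa using hX⟩,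
      fun ⟨w, hw, hX⟩ => ⟨w.reverse, hw.reverse, by simpa using hX⟩⟩⟩

@[simp]
lemma isPathOn_mk {X : Set V} {u v : V} :
    G.IsPathOn X s(u, v) ↔ ∃ w : G.Walk u v, w.IsPath ∧ {x | x ∈ w.support} = X :=
  Iff.rfl

lemma IsPathOn.subset {X : Set V} {p : Sym2 V} (h : G.IsPathOn X p) : {x | x ∈ p} ⊆ X := by
  induction p using Sym2.ind with
  | _ u v =>
    obtain ⟨w, -, rfl⟩ := isPathOn_mk.1 h
    intro x hx
    rcases Sym2.mem_iff.1 hx with rfl | rfl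
    exacts [w.start_mem_support, w.end_mem_support]

lemma IsPathOn.map {G' : SimpleGraph W} (f : G →g G') (hf : Function.Injective f)
    {X : Set V} {p : Sym2 V} (h : G.IsPathOn X p) : G'.IsPathOn (f '' X) (p.map f) := by
  induction p using Sym2.ind with
  | _ u v =>
    obtain ⟨w, hw, rfl⟩ := isPathOn_mk.1 h
    exact ⟨w.map f, hw.map hf, by ext; simp [Walk.support_map]⟩

lemma IsPathOn.union_of_adj {X Y : Set V} {α β α' β' : V} (h : G.IsPathOn X s(α, β))
    (h' : G.IsPathOn Y s(α', β')) (hXY : Disjoint X Y) (hadj : G.Adj β β') :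
    G.IsPathOn (X ∪ Y) s(α, α') := by
  obtain ⟨w, hw, rfl⟩ := isPathOn_mk.1 h
  obtain ⟨w', hw', rfl⟩ := isPathOn_mk.1 (Sym2.eq_swap ▸ h')
  refine ⟨w.append (.cons hadj w'), ?_, ?_⟩
  · rw [Walk.isPath_def, Walk.support_append, Walk.support_cons, List.tail_cons]
    exact hw.support_nodup.append hw'.support_nodup
      fun x hx hx' => Set.disjoint_left.1 hXY hx hx'
  · ext x
    simp only [Walk.mem_support_append_iff, Walk.support_cons, List.mem_cons, Set.mem_union,
      Set.mem_ofPred_eq]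
    constructor
    · rintro (hx | rfl | hx)
      exacts [.inl hx, .inl w.end_mem_support, .inr hx]
    · exact fun hx => hx.imp_right .inr

def IsPathPartition (G : SimpleGraph V) (A : Finset (Sym2 V)) (S : Sym2 V → Set V) : Prop :=
  (∀ p ∈ A, G.IsPathOn (S p) p) ∧ ∀ x, ∃! p, p ∈ A ∧ x ∈ S p

namespace IsPathPartition

variable {C : Finset (Sym2 V)} {S : Sym2 V → Set V}

lemma eq_of_mem (h : G.IsPathPartition C S) {p q : Sym2 V} (hp : p ∈ C) (hq : q ∈ C) {x : V}
    (hxp : x ∈ S p) (hxq : x ∈ S q) : p = q :=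
  (h.2 x).unique ⟨hp, hxp⟩ ⟨hq, hxq⟩

lemma merge [DecidableEq V] (h : G.IsPathPartition C S) {α β α' β' : V} (hp : s(α, β) ∈ C)
    (hq : s(α', β') ∈ C) (hpq : s(α, β) ≠ s(α', β')) (hadj : G.Adj β β') :
    G.IsPathPartition (C \ {s(α, β), s(α', β')} ∪ {s(α, α')})
      (Function.update S s(α, α') (S s(α, β) ∪ S s(α', β'))) := by
  refine ⟨fun j hj => ?_, existsUnique_mem_update_union h.2 hp hq ?_⟩
  · rcases eq_or_ne j s(α, α') with rfl | hj'
    · rw [Function.update_self]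
      refine (h.1 _ hp).union_of_adj (h.1 _ hq) ?_ hadj
      exact Set.disjoint_left.2 fun x hx hx' => hpq (h.eq_of_mem hp hq hx hx')
    · rw [Function.update_of_ne hj']
      simp only [Finset.mem_union, Finset.mem_sdiff, Finset.mem_singleton] at hj
      exact h.1 j (hj.resolve_right hj').1
  · -- `α` lies on the paths of both `s(α, α')` and `s(α, β)`
    rintro j hj hjp - rfl
    exact hjp (h.eq_of_mem hj hp ((h.1 _ hj).subset (Sym2.mem_mk_left α α'))
      ((h.1 _ hp).subset (Sym2.mem_mk_left α β)))

end IsPathPartition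

end SimpleGraph

open SimpleGraph

lemma connectable_iff_exists_isPathPartition {n : ℕ} {A : Finset (Sym2 (Vtx n))} :
    Connectable A ↔ ∃ S, (cube n).IsPathPartition A S := by
  constructor
  · rintro ⟨src, tgt, path, hends, hpath, hcover⟩
    refine ⟨fun p => {x | x ∈ (path p).support}, fun p hp => ?_, hcover⟩
    have : (cube n).IsPathOn {x | x ∈ (path p).support} s(src p, tgt p) :=
      ⟨path p, hpath p hp, rfl⟩
    rwa [← hends p hp] at this
  · rintro ⟨S, hpath, hcover⟩
    have : ∀ p, ∃ u v, ∃ w : (cube n).Walk u v,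
        p ∈ A → p = s(u, v) ∧ w.IsPath ∧ {x | x ∈ w.support} = S p := by
      intro p
      by_cases hp : p ∈ A
      · induction p using Sym2.ind with
        | _ u v => exact ⟨u, v, (hpath _ hp).imp fun w hw _ => ⟨rfl, hw⟩⟩
      · exact ⟨default, default, .nil, fun h => absurd h hp⟩
    choose src tgt path hsrc using this
    refine ⟨src, tgt, path, fun p hp => (hsrc p hp).1, fun p hp => (hsrc p hp).2.1, fun x => ?_⟩
    refine (existsUnique_congr fun p => and_congr_right fun hp => ?_).1 (hcover x)
    rw [← (hsrc p hp).2.2]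
    rfl

lemma cube_adj_update_not {n : ℕ} (β : Vtx n) (i : Fin n) :
    (cube n).Adj β (Function.update β i (!β i)) := by
  change hammingDist _ _ = 1
  rw [hammingDist, Finset.card_eq_one]
  refine ⟨i, Finset.eq_singleton_iff_unique_mem.2 ⟨by simp, fun j hj => ?_⟩⟩
  by_contra hji
  simp [Function.update_of_ne hji] at hj

lemma Connectable.of_stepRel {n : ℕ} {C D : Finset (Sym2 (Vtx n))} (hC : Connectable C)
    (hCD : StepRel C D) : Connectable D := by
  obtain ⟨α, β, α', β', i, hp, hq, rfl, rfl⟩ := hCD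
  obtain ⟨S, hS⟩ := connectable_iff_exists_isPathPartition.1 hC
  by_cases hpq : s(α, β) = s(α', Function.update β i (!β i))
  · obtain ⟨rfl, rfl⟩ : α = Function.update β i (!β i) ∧ α' = β := by
      rcases Sym2.eq_iff.1 hpq with ⟨-, h⟩ | ⟨h, h'⟩
      exacts [absurd h (cube_adj_update_not β i).ne, ⟨h, h'.symm⟩]
    rwa [Sym2.eq_swap, Finset.pair_eq_singleton, Finset.sdiff_union_self_eq_union,
      Finset.union_eq_left.2 (Finset.singleton_subset_iff.2 hq)]
  · exact connectable_iff_exists_isPathPartition.2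
      ⟨_, hS.merge hp hq hpq (cube_adj_update_not β i)⟩

lemma Connectable.of_reflTransGen {n : ℕ} {C D : Finset (Sym2 (Vtx n))} (hC : Connectable C)
    (hCD : Relation.ReflTransGen StepRel C D) : Connectable D := by
  induction hCD with
  | refl => exact hC
  | tail _ hstep ih => exact ih.of_stepRel hstep

lemma hammingDist_insertNth {m : ℕ} {β : Type*} [DecidableEq β] (i : Fin (m + 1)) (b : β)
    (u v : Fin m → β) :
    hammingDist (i.insertNth b u : Fin (m + 1) → β) (i.insertNth b v) = hammingDist u v := by
  simp [hammingDist, Finset.card_filter, Fin.sum_univ_succAbove _ i]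

def cubeInsertNth {m : ℕ} (i : Fin (m + 1)) (b : Bool) : cube m →g cube (m + 1) where
  toFun u := i.insertNth b u
  map_rel' h := (hammingDist_insertNth i b _ _).trans h

@[simp]
lemma coe_cubeInsertNth {m : ℕ} (i : Fin (m + 1)) (b : Bool) :
    ⇑(cubeInsertNth i b) = i.insertNth (α := fun _ => Bool) b :=
  rfl

lemma cubeInsertNth_injective {m : ℕ} (i : Fin (m + 1)) (b : Bool) :
    Function.Injective (cubeInsertNth i b) := fun u v h => by
  simpa using congrArg (Fin.removeNth i) h

section rho

variable {m : ℕ} {i : Fin (m + 1)} {b : Bool}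

lemma mem_rhoPairs {B : Finset (Sym2 (Vtx (m + 1)))} {q : Sym2 (Vtx m)} :
    q ∈ rhoPairs i b B ↔ ∃ p ∈ B, (∀ v ∈ p, v i = b) ∧ p.map (Fin.removeNth i) = q := by
  simp [rhoPairs, and_assoc]

lemma map_insertNth_map_removeNth {p : Sym2 (Vtx (m + 1))} (hp : ∀ v ∈ p, v i = b) :
    (p.map (Fin.removeNth i)).map (i.insertNth b) = p := by
  rw [Sym2.map_map]
  exact (Sym2.map_congr fun v hv => by simp [← hp v hv]).trans (congrFun Sym2.map_id' p)

/-- For `p ∈ B` with `i`-th coordinate `b`, the set assigned to `p` is the image of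
`S b (p.map (Fin.removeNth i))` under `Fin.insertNth i b`. -/
lemma isPathPartition_of_rhoPairs {B : Finset (Sym2 (Vtx (m + 1)))}
    (hconst : ∀ p ∈ B, ∀ u ∈ p, ∀ v ∈ p, u i = v i) {S : Bool → Sym2 (Vtx m) → Set (Vtx m)}
    (hS : ∀ b, (cube m).IsPathPartition (rhoPairs i b B) (S b)) :
    (cube (m + 1)).IsPathPartition B fun p =>
      {x | (∀ v ∈ p, v i = x i) ∧ Fin.removeNth i x ∈ S (x i) (p.map (Fin.removeNth i))} := by
  refine ⟨fun p hp => ?_, fun x => ?_⟩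
  · obtain ⟨b, hb⟩ : ∃ b, ∀ v ∈ p, v i = b :=
      ⟨p.out.1 i, fun v hv => hconst p hp v hv _ p.out_fst_mem⟩
    have hlift := ((hS b).1 _ (mem_rhoPairs.2 ⟨p, hp, hb, rfl⟩)).map _
      (cubeInsertNth_injective i b)
    rw [coe_cubeInsertNth, map_insertNth_map_removeNth hb] at hlift
    have hbx : ∀ c, (∀ v ∈ p, v i = c) ↔ b = c := fun c =>
      ⟨fun h => (hb _ p.out_fst_mem).symm.trans (h _ p.out_fst_mem),
        fun h v hv => (hb v hv).trans h⟩
    convert hlift using 1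
    ext x
    simp only [Set.mem_image, Fin.insertNth_eq_iff, hbx]
    grind
  · obtain ⟨q, ⟨hq, hxq⟩, huniq⟩ := (hS (x i)).2 (Fin.removeNth i x)
    obtain ⟨p, hp, hpi, rfl⟩ := mem_rhoPairs.1 hq
    refine ⟨p, ⟨hp, hpi, hxq⟩, fun p' ⟨hp', hp'i, hxp'⟩ => ?_⟩
    have := huniq _ ⟨mem_rhoPairs.2 ⟨p', hp', hp'i, rfl⟩, hxp'⟩
    rw [← map_insertNth_map_removeNth hp'i, this, map_insertNth_map_removeNth hpi]

lemma connectable_of_forall_connectable_rhoPairs {B : Finset (Sym2 (Vtx (m + 1)))}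
    (hconst : ∀ p ∈ B, ∀ u ∈ p, ∀ v ∈ p, u i = v i) (h : ∀ b, Connectable (rhoPairs i b B)) :
    Connectable B := by
  choose S hS using fun b => connectable_iff_exists_isPathPartition.1 (h b)
  exact connectable_iff_exists_isPathPartition.2 ⟨_, isPathPartition_of_rhoPairs hconst hS⟩

end rho

theorem stmt12_general (m : ℕ)
    (A B : Finset (Sym2 (Vtx (m + 1)))) (i : Fin (m + 1))
    (hstep : Relation.ReflTransGen StepRel B A)
    (hconst : ∀ p ∈ B, ∀ u ∈ p, ∀ v ∈ p, u i = v i)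
    (h0 : Connectable (rhoPairs i false B))
    (h1 : Connectable (rhoPairs i true B)) :
    Connectable A := by
  have hB : Connectable B :=
    connectable_of_forall_connectable_rhoPairs hconst (by rintro (_ | _) <;> assumption)
  exact hB.of_reflTransGen hstep

/-- For `n = m + 1 > 1`: if `B` is an `i`-completion of a
pair-set `A` (i.e. `B ⇒* A` and every pair of `B` has constant `i`-th
coordinate) and both `ρ_{i=0}(B)` and `ρ_{i=1}(B)` are connectable in
`Q_{n-1}`, then `A` is connectable. -/
theorem stmt12 (m : ℕ) (hm : 1 ≤ m)
    (A B : Finset (Sym2 (Vtx (m + 1)))) (i : Fin (m + 1))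
    (hA : IsPairSet A) (hB : IsPairSet B)
    (hstep : Relation.ReflTransGen StepRel B A)
    (hconst : ∀ p ∈ B, ∀ u ∈ p, ∀ v ∈ p, u i = v i)
    (h0 : Connectable (rhoPairs i false B))
    (h1 : Connectable (rhoPairs i true B)) :
    Connectable A :=
  stmt12_general m A B i hstep hconst h0 h1
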